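/- arXiv:1412.1975 — 2 statements merged into one kernel-verified Lean document; each statement's English description precedes it below -/
import Mathlib

section
/- Let A be the 2×2 integer matrix with rows (0, −7) and (1, −6), let D := {(i,0) : 0 ≤ i ≤ 6} ⊂ ℤ², and let T = T(A,D) be the unique nonempty compact subset of ℝ² with A·T = T + D. Set w₀ := (0,0) and w_{n+1} := A·w_n + (3,0) for n ≥ 0 (so w_n = Σ_{k=0}^{n−1} A^k (3,0)). Define W₁^(1) := {(0,0),(1,0),(2,0)}, W₂^(1) := {(3,0)}, W₃^(1) := {(4,0),(5,0),(6,0)}, and for n ≥ 1: W₂^(n+1) := {w_{n+1}}; W₁^(n+1) := (A·W₁^(n) + D) ∪ {A·w_n + (d,0) : d ∈ {4,5,6}} if n is odd and (A·W₁^(n) + D) ∪ {A·w_n + (d,0) : d ∈ {0,1,2}} if n is even; W₃^(n+1) := (A·W₃^(n) + D) ∪ {A·w_n + (d,0) : d ∈ {0,1,2}} if n is odd and (A·W₃^(n) + D) ∪ {A·w_n + (d,0) : d ∈ {4,5,6}} if n is even. Then for all n ≥ 1: (a) (T+v) ∩ (T+v') = ∅ for all v ∈ W₁^(n) and v' ∈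 W₃^(n); and (b) {v ∈ W₁^(n) : (T+v) ∩ (T+w_n) ≠ ∅} equals {A·w_{n−1} + (2,0)} if n is odd and {A·w_{n−1} + (4,0)} if n is even, while {v ∈ W₃^(n) : (T+v) ∩ (T+w_n) ≠ ∅} equals {A·w_{n−1} + (4,0)} if n is odd and {A·w_{n−1} + (2,0)} if n is even. -/
open Set Filter Topology Matrix

noncomputable section

/-- A set is the union of two nonempty separated sets. -/
def SepUnion {α : Type*} [TopologicalSpace α] (S : Set α) : Prop :=
  ∃ U V : Set α, S = U ∪ V ∧ U.Nonempty ∧ V.Nonempty ∧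
    closure U ∩ V = ∅ ∧ U ∩ closure V = ∅

/-- `X` is a cut set of `T`: `X ⊆ T` and `T \ X` is disconnected. -/
def IsCutSet {α : Type*} [TopologicalSpace α] (T X : Set α) : Prop :=
  X ⊆ T ∧ SepUnion (T \ X)

/-- `X` is an irreducible cut set of `T`. -/
def IsIrredCutSet {α : Type*} [TopologicalSpace α] (T X : Set α) : Prop :=
  IsCutSet T X ∧ ∀ X₀ : Set α, X₀ ⊂ X → closure X₀ ∩ T ⊆ X₀ → ¬ SepUnion (T \ X₀)

/-- The real matrix obtained from an integer matrix. -/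
def rmat {d : ℕ} (A : Matrix (Fin d) (Fin d) ℤ) : Matrix (Fin d) (Fin d) ℝ :=
  A.map Int.cast

/-- The real vector obtained from an integer vector. -/
def rvec {d : ℕ} (v : Fin d → ℤ) : Fin d → ℝ := fun i => (v i : ℝ)

/-- The translate `T + v` of `T` by a lattice vector `v`. -/
def trT {d : ℕ} (T : Set (Fin d → ℝ)) (v : Fin d → ℤ) : Set (Fin d → ℝ) :=
  (fun x => x + rvec v) '' T

/-- Every complex eigenvalue of `A` has modulus `> 1`. -/
def Expanding {d : ℕ} (A : Matrix (Fin d) (Fin d) ℤ) : Prop :=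
  ∀ μ : ℂ, Module.End.HasEigenvalue (Matrix.toLin' (A.map (Int.cast : ℤ → ℂ))) μ →
    1 < ‖μ‖

/-- `D` is a complete set of coset representatives of `ℤ^d / A ℤ^d`. -/
def ResidueSystem {d : ℕ} (A : Matrix (Fin d) (Fin d) ℤ) (D : Set (Fin d → ℤ)) : Prop :=
  ∀ x : Fin d → ℤ, ∃! e, e ∈ D ∧ ∃ y : Fin d → ℤ, x = A.mulVec y + e

/-- `T` is the attractor `T(A,D)`: nonempty, compact, with `A·T = T + D`. -/
def SelfAffine {d : ℕ} (A : Matrix (Fin d) (Fin d) ℤ) (D : Set (Fin d → ℤ))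
    (T : Set (Fin d → ℝ)) : Prop :=
  T.Nonempty ∧ IsCompact T ∧
    (rmat A).mulVec '' T = ⋃ e ∈ D, (fun x => x + rvec e) '' T

/-- `T = T(A,D)` is a `ℤ^d`-tile: a self-affine attractor for an expanding integer
matrix and a standard digit set, with nonempty interior, tiling `ℝ^d` by `ℤ^d`. -/
def IsZdTile {d : ℕ} (A : Matrix (Fin d) (Fin d) ℤ) (D : Set (Fin d → ℤ))
    (T : Set (Fin d → ℝ)) : Prop :=
  Expanding A ∧ ResidueSystem A D ∧ SelfAffine A D T ∧ (interior T).Nonempty ∧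
    (⋃ v : Fin d → ℤ, trT T v) = univ ∧
    Pairwise fun v₁ v₂ : Fin d → ℤ => interior (trT T v₁) ∩ trT T v₂ = ∅

/-- `V_n = D + A·D + ⋯ + A^{n-1}·D`, the vertex set of the `n`-th Hata graph. -/
def Vset {d : ℕ} (A : Matrix (Fin d) (Fin d) ℤ) (D : Set (Fin d → ℤ)) (n : ℕ) :
    Set (Fin d → ℤ) :=
  {v | ∃ dig : Fin n → (Fin d → ℤ), (∀ k, dig k ∈ D) ∧
    v = ∑ k : Fin n, (A ^ (k : ℕ)).mulVec (dig k)}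

/-- The set of children `C(U) = A·U + D`. -/
def childSet {d : ℕ} (A : Matrix (Fin d) (Fin d) ℤ) (D : Set (Fin d → ℤ))
    (U : Set (Fin d → ℤ)) : Set (Fin d → ℤ) :=
  {w | ∃ u ∈ U, ∃ e ∈ D, w = A.mulVec u + e}

/-- `X_n(W) = ⋃_{v ∈ W} A^{-n}(T + v)`. -/
def XnSet {d : ℕ} (A : Matrix (Fin d) (Fin d) ℤ) (T : Set (Fin d → ℝ)) (n : ℕ)
    (W : Set (Fin d → ℤ)) : Set (Fin d → ℝ) :=
  ⋃ v ∈ W, ((rmat A)⁻¹ ^ n).mulVec '' trT T v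

/-- The subgraph of the `n`-th Hata graph induced on `W` is connected:
any two vertices of `W` are joined by a path inside `W`, consecutive tiles meeting. -/
def HataConn {d : ℕ} (T : Set (Fin d → ℝ)) (W : Set (Fin d → ℤ)) : Prop :=
  ∀ v ∈ W, ∀ w ∈ W,
    Relation.ReflTransGen (fun a b => a ∈ W ∧ b ∈ W ∧ (trT T a ∩ trT T b).Nonempty) v w

/-- The matrix of Example 4.3 (CNS tile, `A = 6`, `B = 7`). -/
def A67 : Matrix (Fin 2) (Fin 2) ℤ := !![0, -7; 1, -6]

/-- The digit set of Example 4.3. -/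
def D67 : Set (Fin 2 → ℤ) := {v | ∃ i : ℤ, 0 ≤ i ∧ i ≤ 6 ∧ v = ![i, 0]}

/-!
Tiles `T + v` and `T + v'` meet iff `v' - v` is a neighbour of `T`. The maps `x ↦ A⁻¹ (x + e)`
leave the parallelogram `K67` invariant, so `T ⊆ K67` and every neighbour lies in `K67 - K67`.
Neighbours `s` produce neighbours `A s + j` with `|j| ≤ 6`, and two such steps rule out every
`(m, 1)` with `-6 ≤ m ≤ 3`; among the horizontal vectors only `(0, 0)` and `(±1, 0)` are
neighbours, the latter because `T` contains two periodic points that differ by `(1, 0)`.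

The statement then propagates from `n` to `n + 1`. Tiles meet only if their parents meet, so
children of `W₁` and `W₃` stay apart, and a new tile can meet `T + w_{n+1}`, where
`w_{n+1} = A w_n + (3, 0)`, only if it is a horizontal sibling or a child of the neighbour
`w_n ∓ (1, 0)` of `w_n`; the latter differ from `w_{n+1}` by some excluded `(m, ±1)`.
-/

open Function

attribute [local instance] Matrix.linftyOpNormedAddCommGroup Matrix.linftyOpNormedRing

theorem ContractingWith.mem_of_isFixedPt {X : Type*} [MetricSpace X] {K : NNReal} {f : X → X}
    (hf : ContractingWith K f) {s : Set X} (hs : IsComplete s) (hne : s.Nonempty)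
    (hsf : MapsTo f s s) {p : X} (hp : IsFixedPt f p) : p ∈ s := by
  obtain ⟨x, hx⟩ := hne
  obtain ⟨y, hy, hfy, -⟩ := (hf.restrict hsf).exists_fixedPoint' hs hsf hx (edist_ne_top _ _)
  rwa [hf.fixedPoint_unique' hp hfy]

section Tiles

variable {d : ℕ}

theorem contractingWith_of_sub_eq_mulVec {N : Matrix (Fin d) (Fin d) ℝ} (hN : ‖N‖ < 1)
    {f : (Fin d → ℝ) → Fin d → ℝ} (hf : ∀ x y, f x - f y = N *ᵥ (x - y)) :
    ContractingWith ‖N‖₊ f :=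
  ⟨hN, LipschitzWith.of_dist_le_mul fun x y => by
    rw [dist_eq_norm, dist_eq_norm, hf]
    exact linfty_opNorm_mulVec _ _⟩

@[simp] theorem rvec_add (u v : Fin d → ℤ) : rvec (u + v) = rvec u + rvec v := by
  ext i; simp [rvec]

@[simp] theorem rvec_sub (u v : Fin d → ℤ) : rvec (u - v) = rvec u - rvec v := by
  ext i; simp [rvec]

@[simp] theorem rvec_vec2 (a b : ℤ) : rvec ![a, b] = ![(a : ℝ), b] := by
  ext i; fin_cases i <;> rfl

theorem rmat_mulVec_rvec (A : Matrix (Fin d) (Fin d) ℤ) (v : Fin d → ℤ) :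
    rmat A *ᵥ rvec v = rvec (A *ᵥ v) := by
  ext i; exact (RingHom.map_mulVec (Int.castRingHom ℝ) A v i).symm

theorem mem_trT {T : Set (Fin d → ℝ)} {v : Fin d → ℤ} {x : Fin d → ℝ} :
    x ∈ trT T v ↔ x - rvec v ∈ T := by
  refine ⟨?_, fun h => ⟨_, h, sub_add_cancel x _⟩⟩
  rintro ⟨t, ht, rfl⟩
  simpa using ht

def IsNeighbor (T : Set (Fin d → ℝ)) (s : Fin d → ℤ) : Prop := (T ∩ trT T s).Nonempty

theorem trT_inter_trT_nonempty_iff {T : Set (Fin d → ℝ)} {v v' : Fin d → ℤ} :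
    (trT T v ∩ trT T v').Nonempty ↔ IsNeighbor T (v' - v) := by
  constructor
  · rintro ⟨x, hx, hx'⟩
    refine ⟨x - rvec v, mem_trT.1 hx, mem_trT.2 ?_⟩
    simpa [sub_sub] using mem_trT.1 hx'
  · rintro ⟨x, hx, hx'⟩
    refine ⟨x + rvec v, mem_trT.2 (by simpa using hx), mem_trT.2 ?_⟩
    simpa [sub_sub_eq_add_sub] using mem_trT.1 hx'

theorem isNeighbor_neg {T : Set (Fin d → ℝ)} {s : Fin d → ℤ} :
    IsNeighbor T (-s) ↔ IsNeighbor T s := by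
  rw [← zero_sub, ← trT_inter_trT_nonempty_iff, inter_comm, trT_inter_trT_nonempty_iff, sub_zero]

namespace SelfAffine

variable {A : Matrix (Fin d) (Fin d) ℤ} {D : Set (Fin d → ℤ)} {T : Set (Fin d → ℝ)}

theorem exists_digit (hT : SelfAffine A D T) {t : Fin d → ℝ} (ht : t ∈ T) :
    ∃ e ∈ D, ∃ u ∈ T, rmat A *ᵥ t = u + rvec e := by
  have : rmat A *ᵥ t ∈ (rmat A).mulVec '' T := mem_image_of_mem _ ht
  rw [hT.2.2] at this
  obtain ⟨e, he, u, hu, hue⟩ := mem_iUnion₂.1 this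
  exact ⟨e, he, u, hu, hue.symm⟩

theorem exists_mulVec_eq (hT : SelfAffine A D T) {t : Fin d → ℝ} (ht : t ∈ T)
    {e : Fin d → ℤ} (he : e ∈ D) : ∃ u ∈ T, rmat A *ᵥ u = t + rvec e := by
  have : t + rvec e ∈ ⋃ e ∈ D, (fun x => x + rvec e) '' T :=
    mem_iUnion₂.2 ⟨e, he, t, ht, rfl⟩
  rwa [← hT.2.2] at this

theorem trT_mulVec_add_subset (hT : SelfAffine A D T) (u : Fin d → ℤ) {e : Fin d → ℤ}
    (he : e ∈ D) : trT T (A *ᵥ u + e) ⊆ (rmat A).mulVec '' trT T u := by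
  intro x hx
  obtain ⟨y, hy, hye⟩ := hT.exists_mulVec_eq (mem_trT.1 hx) he
  refine ⟨y + rvec u, mem_trT.2 (by simpa using hy), ?_⟩
  rw [mulVec_add, hye, rmat_mulVec_rvec, rvec_add]
  abel

theorem isNeighbor_mulVec_add_sub (hT : SelfAffine A D T) {s : Fin d → ℤ}
    (h : IsNeighbor T s) : ∃ e ∈ D, ∃ e' ∈ D, IsNeighbor T (A *ᵥ s + e - e') := by
  obtain ⟨x, hx, hxs⟩ := h
  obtain ⟨e', he', u, hu, hAx⟩ := hT.exists_digit hx
  obtain ⟨e, he, u', hu', hAx'⟩ := hT.exists_digit (mem_trT.1 hxs)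
  refine ⟨e, he, e', he', u, hu, mem_trT.2 ?_⟩
  have hsplit : rmat A *ᵥ x = rmat A *ᵥ (x - rvec s) + rvec (A *ᵥ s) := by
    rw [← rmat_mulVec_rvec, ← mulVec_add, sub_add_cancel]
  rw [hAx, hAx'] at hsplit
  have : u - rvec (A *ᵥ s + e - e') = u' := by
    simp only [rvec_sub, rvec_add]
    linear_combination hsplit
  rwa [this]

variable {B : Matrix (Fin d) (Fin d) ℝ}

theorem mapsTo_digit (hT : SelfAffine A D T) (hB : B * rmat A = 1) {e : Fin d → ℤ}
    (he : e ∈ D) : MapsTo (fun x => B *ᵥ (x + rvec e)) T T := by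
  intro t ht
  obtain ⟨u, hu, hue⟩ := hT.exists_mulVec_eq ht he
  simpa [← hue, mulVec_mulVec, hB] using hu

theorem nonempty_inter_of_child (hT : SelfAffine A D T) (hB : B * rmat A = 1)
    {u u' e e' : Fin d → ℤ} (he : e ∈ D) (he' : e' ∈ D)
    (h : (trT T (A *ᵥ u + e) ∩ trT T (A *ᵥ u' + e')).Nonempty) :
    (trT T u ∩ trT T u').Nonempty := by
  have hinj : Injective (rmat A).mulVec :=
    LeftInverse.injective (g := B.mulVec) fun x => by rw [mulVec_mulVec, hB, one_mulVec]
  obtain ⟨_, hx, hx'⟩ := h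
  obtain ⟨y, hy, rfl⟩ := hT.trT_mulVec_add_subset u he hx
  obtain ⟨y', hy', hyy'⟩ := hT.trT_mulVec_add_subset u' he' hx'
  exact ⟨y, hy, hinj hyy' ▸ hy'⟩

theorem exists_eq_add_pow_mulVec (hT : SelfAffine A D T) (hB : B * rmat A = 1)
    {K : Set (Fin d → ℝ)} (h0 : 0 ∈ K) (hK : ∀ e ∈ D, MapsTo (fun x => B *ᵥ (x + rvec e)) K K)
    (n : ℕ) {t : Fin d → ℝ} (ht : t ∈ T) : ∃ k ∈ K, ∃ u ∈ T, t = k + (B ^ n) *ᵥ u := by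
  induction n generalizing t with
  | zero => exact ⟨0, h0, t, ht, by simp⟩
  | succ n ih =>
    obtain ⟨e, he, t₁, ht₁, hAt⟩ := hT.exists_digit ht
    obtain ⟨k, hk, u, hu, rfl⟩ := ih ht₁
    refine ⟨B *ᵥ (k + rvec e), hK e he hk, u, hu, ?_⟩
    calc t = B *ᵥ (rmat A *ᵥ t) := by rw [mulVec_mulVec, hB, one_mulVec]
      _ = B *ᵥ (k + rvec e) + (B ^ (n + 1)) *ᵥ u := by
        rw [hAt, pow_succ', ← mulVec_mulVec, ← mulVec_add, add_right_comm]

theorem subset_of_mapsTo (hT : SelfAffine A D T) (hB : B * rmat A = 1) {m : ℕ}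
    (hm : ‖B ^ m‖ < 1) {K : Set (Fin d → ℝ)} (hKc : IsClosed K) (h0 : 0 ∈ K)
    (hK : ∀ e ∈ D, MapsTo (fun x => B *ᵥ (x + rvec e)) K K) : T ⊆ K := by
  obtain ⟨R, hR⟩ := hT.2.1.isBounded.exists_norm_le
  intro t ht
  rw [← hKc.closure_eq, Metric.mem_closure_iff]
  intro ε hε
  have hlim : Tendsto (fun n => ‖B ^ m‖ ^ n * R) atTop (𝓝 0) := by
    simpa using (tendsto_pow_atTop_nhds_zero_of_lt_one (norm_nonneg _) hm).mul_const R
  obtain ⟨n, hn, hn0⟩ := ((hlim.eventually (gt_mem_nhds hε)).and (eventually_gt_atTop 0)).exists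
  obtain ⟨k, hk, u, hu, rfl⟩ := hT.exists_eq_add_pow_mulVec hB h0 hK (m * n) ht
  refine ⟨k, hk, ?_⟩
  calc dist (k + (B ^ (m * n)) *ᵥ u) k = ‖(B ^ m) ^ n *ᵥ u‖ := by
        rw [dist_eq_norm, add_sub_cancel_left, pow_mul]
    _ ≤ ‖B ^ m‖ ^ n * R := (linfty_opNorm_mulVec _ _).trans
        (mul_le_mul (norm_pow_le' _ hn0) (hR u hu) (norm_nonneg _) (by positivity))
    _ < ε := hn

end SelfAffine

end Tiles

section A67

variable {T : Set (Fin 2 → ℝ)}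

theorem A67_mulVec (v : Fin 2 → ℤ) : A67 *ᵥ v = ![-7 * v 1, v 0 - 6 * v 1] := by
  rw [A67, mulVec_fin_two]
  ext i; fin_cases i <;> simp; ring

theorem vec_mem_D67 {i : ℤ} (h0 : 0 ≤ i) (h6 : i ≤ 6) : ![i, 0] ∈ D67 := ⟨i, h0, h6, rfl⟩

theorem vec2_add_vec2 (a b c d : ℤ) : ![a, b] + ![c, d] = ![a + c, b + d] := by
  ext i; fin_cases i <;> rfl

theorem vec2_sub_vec2 (a b c d : ℤ) : ![a, b] - ![c, d] = ![a - c, b - d] := by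
  ext i; fin_cases i <;> rfl

theorem add_vec_add_one (v : Fin 2 → ℤ) (a : ℤ) : v + ![a, 0] + ![1, 0] = v + ![a + 1, 0] := by
  rw [add_assoc, vec2_add_vec2, add_zero]

theorem add_vec_sub_one (v : Fin 2 → ℤ) (a : ℤ) : v + ![a, 0] - ![1, 0] = v + ![a - 1, 0] := by
  rw [add_sub_assoc, vec2_sub_vec2, sub_zero]

def B67 : Matrix (Fin 2) (Fin 2) ℝ := !![-6/7, 1; -1/7, 0]

theorem B67_mulVec (v : Fin 2 → ℝ) : B67 *ᵥ v = ![-6/7 * v 0 + v 1, -1/7 * v 0] := by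
  rw [B67, mulVec_fin_two]
  ext i; fin_cases i <;> simp

theorem B67_mul_rmat_A67 : B67 * rmat A67 = 1 := by
  have : rmat A67 = !![0, -7; 1, -6] := by
    ext i j; fin_cases i <;> fin_cases j <;> simp [rmat, A67]
  rw [this, B67, mul_fin_two, one_fin_two]
  norm_num

theorem norm_B67_pow_three_lt_one : ‖B67 ^ 3‖ < 1 := by
  have : B67 ^ 3 = !![-132/343, 203/343; -29/343, 42/343] := by
    rw [pow_three, B67, mul_fin_two, mul_fin_two]
    norm_num
  rw [this]
  norm_num [linfty_opNorm_def, Fin.sum_univ_two]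

/-- The two functionals approximate the left eigenvectors `x₀ - (3 ± √2) x₁` of `B67`. -/
def K67 : Set (Fin 2 → ℝ) :=
  {x | -631 ≤ 100 * x 0 - 160 * x 1 ∧ 100 * x 0 - 160 * x 1 ≤ 400 ∧
    -151 ≤ 100 * x 0 - 440 * x 1 ∧ 100 * x 0 - 440 * x 1 ≤ 40}

theorem isClosed_K67 : IsClosed K67 := by
  simp only [K67, ofPred_and]
  refine (isClosed_le ?_ ?_).inter ((isClosed_le ?_ ?_).inter ((isClosed_le ?_ ?_).inter
    (isClosed_le ?_ ?_))) <;> fun_prop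

theorem mapsTo_K67 {e : Fin 2 → ℤ} (he : e ∈ D67) :
    MapsTo (fun x => B67 *ᵥ (x + rvec e)) K67 K67 := by
  obtain ⟨i, hi0, hi6, rfl⟩ := he
  have hi0' : (0 : ℝ) ≤ i := by exact_mod_cast hi0
  have hi6' : (i : ℝ) ≤ 6 := by exact_mod_cast hi6
  rintro x ⟨h1, h2, h3, h4⟩
  simp only [K67, mem_ofPred_eq, B67_mulVec, rvec_vec2, Pi.add_apply, cons_val_zero, cons_val_one,
    cons_val_fin_one, Int.cast_zero, add_zero]
  refine ⟨?_, ?_, ?_, ?_⟩ <;> linarith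

namespace SelfAffine

theorem subset_K67 (hT : SelfAffine A67 D67 T) : T ⊆ K67 :=
  hT.subset_of_mapsTo B67_mul_rmat_A67 norm_B67_pow_three_lt_one isClosed_K67
    (by norm_num [K67]) fun _ => mapsTo_K67

theorem isNeighbor_bound (hT : SelfAffine A67 D67 T) {a b : ℤ} (h : IsNeighbor T ![a, b]) :
    -1031 ≤ 100 * a - 160 * b ∧ 100 * a - 160 * b ≤ 1031 ∧
      -191 ≤ 100 * a - 440 * b ∧ 100 * a - 440 * b ≤ 191 := by
  obtain ⟨x, hx, hx'⟩ := h
  obtain ⟨h1, h2, h3, h4⟩ := hT.subset_K67 hx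
  obtain ⟨h1', h2', h3', h4'⟩ := hT.subset_K67 (mem_trT.1 hx')
  simp only [rvec_vec2, Pi.sub_apply, cons_val_zero, cons_val_one, cons_val_fin_one]
    at h1' h2' h3' h4'
  refine ⟨?_, ?_, ?_, ?_⟩ <;> rify <;> linarith

theorem isNeighbor_step (hT : SelfAffine A67 D67 T) {a b : ℤ} (h : IsNeighbor T ![a, b]) :
    ∃ j : ℤ, -6 ≤ j ∧ j ≤ 6 ∧ IsNeighbor T ![-7 * b + j, a - 6 * b] := by
  obtain ⟨_, ⟨i, hi0, hi6, rfl⟩, _, ⟨i', hi0', hi6', rfl⟩, h'⟩ := hT.isNeighbor_mulVec_add_sub h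
  refine ⟨i - i', by omega, by omega, ?_⟩
  convert h' using 2
  rw [A67_mulVec]
  ext k; fin_cases k <;> simp; ring

/-- Two steps lead from `(m, 1)` to `(j - 7, m - 6)` and `(j' - 7 m + 42, j - 6 m + 29)`; one of
the three violates `isNeighbor_bound`. -/
theorem not_isNeighbor_up (hT : SelfAffine A67 D67 T) {m : ℤ} (hm : -6 ≤ m) (hm' : m ≤ 3) :
    ¬ IsNeighbor T ![m, 1] := by
  intro h
  obtain ⟨j, hj, hj', h₁⟩ := hT.isNeighbor_step h
  obtain ⟨j', -, -, h₂⟩ := hT.isNeighbor_step h₁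
  have := hT.isNeighbor_bound h
  have := hT.isNeighbor_bound h₁
  have := hT.isNeighbor_bound h₂
  omega

theorem isNeighbor_one (hT : SelfAffine A67 D67 T) : IsNeighbor T ![1, 0] := by
  let f : Fin 7 → (Fin 2 → ℝ) → Fin 2 → ℝ := fun i x => B67 *ᵥ (x + rvec ![(i : ℤ), 0])
  have hf : ∀ i, MapsTo (f i) T T := fun i =>
    hT.mapsTo_digit B67_mul_rmat_A67 (vec_mem_D67 (by positivity) (by omega))
  have mem : ∀ i j k p, IsFixedPt (f i ∘ f j ∘ f k) p → p ∈ T := fun i j k p hp =>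
    (contractingWith_of_sub_eq_mulVec norm_B67_pow_three_lt_one fun x y => by
      simp only [f, Function.comp_apply, ← mulVec_sub, add_sub_add_right_eq_sub, mulVec_mulVec,
        pow_three]).mem_of_isFixedPt hT.2.1.isClosed.isComplete hT.1
      ((hf i).comp ((hf j).comp (hf k))) hp
  refine ⟨![-57/31, -87/217], mem 0 0 6 _ ?_, mem_trT.2 (mem 5 1 0 _ ?_)⟩ <;>
  · simp only [IsFixedPt, f, Function.comp_apply, rvec_vec2, B67_mulVec]
    ext k; fin_cases k <;> simp <;> norm_num

theorem isNeighbor_horizontal_iff (hT : SelfAffine A67 D67 T) {m : ℤ} :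
    IsNeighbor T ![m, 0] ↔ |m| ≤ 1 := by
  refine ⟨fun h => ?_, fun h => ?_⟩
  · have := hT.isNeighbor_bound h
    rw [abs_le]; omega
  · rcases (by rw [abs_le] at h; omega : m = -1 ∨ m = 0 ∨ m = 1) with rfl | rfl | rfl
    · simpa using isNeighbor_neg.2 hT.isNeighbor_one
    · obtain ⟨t, ht⟩ := hT.1
      exact ⟨t, ht, t, ht, by ext i; fin_cases i <;> simp⟩
    · exact hT.isNeighbor_one

theorem meets_siblings_iff (hT : SelfAffine A67 D67 T) (v : Fin 2 → ℤ) (i j : ℤ) :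
    (trT T (v + ![i, 0]) ∩ trT T (v + ![j, 0])).Nonempty ↔ |j - i| ≤ 1 := by
  rw [trT_inter_trT_nonempty_iff, add_sub_add_left_eq_sub, vec2_sub_vec2, sub_zero,
    hT.isNeighbor_horizontal_iff]

theorem not_meets_cousins (hT : SelfAffine A67 D67 T) (u : Fin 2 → ℤ) {i j : ℤ}
    (h : -6 ≤ j - i) (h' : j - i ≤ 3) :
    ¬ (trT T (A67 *ᵥ u + ![i, 0]) ∩ trT T (A67 *ᵥ (u + ![1, 0]) + ![j, 0])).Nonempty := by
  rw [trT_inter_trT_nonempty_iff]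
  convert hT.not_isNeighbor_up h h' using 2
  rw [mulVec_add, A67_mulVec ![1, 0]]
  ext k; fin_cases k <;> simp

theorem not_meets_of_child_left (hT : SelfAffine A67 D67 T) {U : Set (Fin 2 → ℤ)}
    {w v : Fin 2 → ℤ} (hU : ∀ u ∈ U, (trT T u ∩ trT T w).Nonempty → u + ![1, 0] = w)
    (hv : v ∈ childSet A67 D67 U) {j : ℤ} (hj : 0 ≤ j) (hj' : j ≤ 3) :
    ¬ (trT T v ∩ trT T (A67 *ᵥ w + ![j, 0])).Nonempty := by
  obtain ⟨u, hu, _, ⟨i, hi, hi', rfl⟩, rfl⟩ := hv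
  intro h
  obtain rfl := hU u hu
    (hT.nonempty_inter_of_child B67_mul_rmat_A67 (vec_mem_D67 hi hi') (vec_mem_D67 hj (by omega)) h)
  exact hT.not_meets_cousins u (by omega) (by omega) h

theorem not_meets_of_child_right (hT : SelfAffine A67 D67 T) {V : Set (Fin 2 → ℤ)}
    {w v : Fin 2 → ℤ} (hV : ∀ u ∈ V, (trT T u ∩ trT T w).Nonempty → u = w + ![1, 0])
    (hv : v ∈ childSet A67 D67 V) {j : ℤ} (hj : 3 ≤ j) (hj' : j ≤ 6) :
    ¬ (trT T v ∩ trT T (A67 *ᵥ w + ![j, 0])).Nonempty := by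
  obtain ⟨u, hu, _, ⟨i, hi, hi', rfl⟩, rfl⟩ := hv
  intro h
  obtain rfl := hV u hu
    (hT.nonempty_inter_of_child B67_mul_rmat_A67 (vec_mem_D67 hi hi') (vec_mem_D67 (by omega) hj') h)
  rw [inter_comm] at h
  exact hT.not_meets_cousins w (by omega) (by omega) h

end SelfAffine

def Flanked (T : Set (Fin 2 → ℝ)) (L R : Set (Fin 2 → ℤ)) (w : Fin 2 → ℤ) : Prop :=
  (∀ v ∈ L, ∀ v' ∈ R, trT T v ∩ trT T v' = ∅) ∧
    {v ∈ L | (trT T v ∩ trT T w).Nonempty} = {w - ![1, 0]} ∧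
    {v ∈ R | (trT T v ∩ trT T w).Nonempty} = {w + ![1, 0]}

theorem SelfAffine.flanked_childSet (hT : SelfAffine A67 D67 T) {U V : Set (Fin 2 → ℤ)}
    {w : Fin 2 → ℤ} (hUV : ∀ v ∈ U, ∀ v' ∈ V, trT T v ∩ trT T v' = ∅)
    (hU : ∀ u ∈ U, (trT T u ∩ trT T w).Nonempty → u + ![1, 0] = w)
    (hV : ∀ u ∈ V, (trT T u ∩ trT T w).Nonempty → u = w + ![1, 0]) :
    Flanked T
      (childSet A67 D67 V ∪
        {A67 *ᵥ w + ![0, 0], A67 *ᵥ w + ![1, 0], A67 *ᵥ w + ![2, 0]})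
      (childSet A67 D67 U ∪
        {A67 *ᵥ w + ![4, 0], A67 *ᵥ w + ![5, 0], A67 *ᵥ w + ![6, 0]})
      (A67 *ᵥ w + ![3, 0]) := by
  have siblings := hT.meets_siblings_iff (A67 *ᵥ w)
  refine ⟨fun v hv v' hv' => ?_, ?_, ?_⟩
  · rw [← not_nonempty_iff_eq_empty]
    rcases hv with hv | hv <;> rcases hv' with hv' | hv'
    · obtain ⟨u', hu', e', he', rfl⟩ := hv
      obtain ⟨u, hu, e, he, rfl⟩ := hv'
      intro h
      have := hT.nonempty_inter_of_child B67_mul_rmat_A67 he' he h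
      rw [inter_comm, hUV u hu u' hu'] at this
      exact not_nonempty_empty this
    · rcases hv' with rfl | rfl | rfl <;>
        exact hT.not_meets_of_child_right hV hv (by norm_num) (by norm_num)
    · rw [inter_comm]
      rcases hv with rfl | rfl | rfl <;>
        exact hT.not_meets_of_child_left hU hv' (by norm_num) (by norm_num)
    · rcases hv with rfl | rfl | rfl <;> rcases hv' with rfl | rfl | rfl <;>
        rw [siblings] <;> norm_num
  · ext v
    rw [add_vec_sub_one]
    simp only [mem_ofPred_eq, mem_union, mem_insert_iff, mem_singleton_iff]
    constructor
    · rintro ⟨hv | rfl | rfl | rfl, h⟩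
      · exact absurd h (hT.not_meets_of_child_right hV hv le_rfl (by norm_num))
      iterate 2 · rw [siblings] at h; norm_num at h
      · norm_num
    · rintro rfl
      rw [siblings]; norm_num
  · ext v
    rw [add_vec_add_one]
    simp only [mem_ofPred_eq, mem_union, mem_insert_iff, mem_singleton_iff]
    constructor
    · rintro ⟨hv | rfl | rfl | rfl, h⟩
      · exact absurd h (hT.not_meets_of_child_left hU hv (by norm_num) le_rfl)
      · norm_num
      iterate 2 · rw [siblings] at h; norm_num at h
    · rintro rfl
      rw [siblings]; norm_num

theorem Flanked.childSet (hT : SelfAffine A67 D67 T) {L R : Set (Fin 2 → ℤ)} {w : Fin 2 → ℤ}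
    (h : Flanked T L R w) :
    Flanked T
      (childSet A67 D67 R ∪
        {A67 *ᵥ w + ![0, 0], A67 *ᵥ w + ![1, 0], A67 *ᵥ w + ![2, 0]})
      (childSet A67 D67 L ∪
        {A67 *ᵥ w + ![4, 0], A67 *ᵥ w + ![5, 0], A67 *ᵥ w + ![6, 0]})
      (A67 *ᵥ w + ![3, 0]) := by
  obtain ⟨hLR, hL, hR⟩ := h
  refine hT.flanked_childSet hLR (fun u hu hmeet => ?_) fun u hu hmeet => ?_
  · rw [(eq_singleton_iff_unique_mem.1 hL).2 u ⟨hu, hmeet⟩, sub_add_cancel]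
  · exact (eq_singleton_iff_unique_mem.1 hR).2 u ⟨hu, hmeet⟩

end A67

theorem statement16_general (T : Set (Fin 2 → ℝ)) (hself : SelfAffine A67 D67 T)
    (w : ℕ → Fin 2 → ℤ) (hw0 : w 0 = 0)
    (hwrec : ∀ n, w (n + 1) = A67.mulVec (w n) + ![3, 0])
    (W₁ W₃ : ℕ → Set (Fin 2 → ℤ))
    (h11 : W₁ 1 = {![0, 0], ![1, 0], ![2, 0]})
    (h31 : W₃ 1 = {![4, 0], ![5, 0], ![6, 0]})
    (h1odd : ∀ n, 1 ≤ n → n % 2 = 1 → W₁ (n + 1) = childSet A67 D67 (W₁ n) ∪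
      {A67.mulVec (w n) + ![4, 0], A67.mulVec (w n) + ![5, 0], A67.mulVec (w n) + ![6, 0]})
    (h1even : ∀ n, 1 ≤ n → n % 2 = 0 → W₁ (n + 1) = childSet A67 D67 (W₁ n) ∪
      {A67.mulVec (w n) + ![0, 0], A67.mulVec (w n) + ![1, 0], A67.mulVec (w n) + ![2, 0]})
    (h3odd : ∀ n, 1 ≤ n → n % 2 = 1 → W₃ (n + 1) = childSet A67 D67 (W₃ n) ∪
      {A67.mulVec (w n) + ![0, 0], A67.mulVec (w n) + ![1, 0], A67.mulVec (w n) + ![2, 0]})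
    (h3even : ∀ n, 1 ≤ n → n % 2 = 0 → W₃ (n + 1) = childSet A67 D67 (W₃ n) ∪
      {A67.mulVec (w n) + ![4, 0], A67.mulVec (w n) + ![5, 0], A67.mulVec (w n) + ![6, 0]}) :
    ∀ n, 1 ≤ n →
      (∀ v ∈ W₁ n, ∀ v' ∈ W₃ n, trT T v ∩ trT T v' = ∅) ∧
      (n % 2 = 1 →
        {v ∈ W₁ n | (trT T v ∩ trT T (w n)).Nonempty} = {A67.mulVec (w (n - 1)) + ![2, 0]} ∧
        {v ∈ W₃ n | (trT T v ∩ trT T (w n)).Nonempty} = {A67.mulVec (w (n - 1)) + ![4, 0]}) ∧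
      (n % 2 = 0 →
        {v ∈ W₁ n | (trT T v ∩ trT T (w n)).Nonempty} = {A67.mulVec (w (n - 1)) + ![4, 0]} ∧
        {v ∈ W₃ n | (trT T v ∩ trT T (w n)).Nonempty} = {A67.mulVec (w (n - 1)) + ![2, 0]}) := by
  have flanked : ∀ n, 1 ≤ n → (n % 2 = 1 → Flanked T (W₁ n) (W₃ n) (w n)) ∧
      (n % 2 = 0 → Flanked T (W₃ n) (W₁ n) (w n)) := by
    intro n hn
    induction n, hn using Nat.le_induction with
    | base =>
      refine ⟨fun _ => ?_, by simp⟩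
      have := hself.flanked_childSet (U := ∅) (V := ∅) (w := w 0) (by simp) (by simp) (by simp)
      simpa [childSet, h11, h31, hwrec, hw0] using this
    | succ n hn ih =>
      rw [hwrec]
      rcases Nat.mod_two_eq_zero_or_one n with h | h
      · refine ⟨fun _ => ?_, by omega⟩
        rw [h1even n hn h, h3even n hn h]
        exact (ih.2 h).childSet hself
      · refine ⟨by omega, fun _ => ?_⟩
        rw [h3odd n hn h, h1odd n hn h]
        exact (ih.1 h).childSet hself
  intro n hn
  have hw : w n = A67 *ᵥ w (n - 1) + ![3, 0] := by rw [← hwrec, Nat.sub_add_cancel hn]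
  have hleft : w n - ![1, 0] = A67 *ᵥ w (n - 1) + ![2, 0] := by
    rw [hw, add_vec_sub_one]; norm_num
  have hright : w n + ![1, 0] = A67 *ᵥ w (n - 1) + ![4, 0] := by
    rw [hw, add_vec_add_one]; norm_num
  rcases Nat.mod_two_eq_zero_or_one n with h | h
  · obtain ⟨hdisj, h₃, h₁⟩ := (flanked n hn).2 h
    refine ⟨fun v hv v' hv' => ?_, by omega, fun _ => ⟨h₁.trans (by rw [hright]),
      h₃.trans (by rw [hleft])⟩⟩
    rw [inter_comm]
    exact hdisj v' hv' v hv
  · obtain ⟨hdisj, h₁, h₃⟩ := (flanked n hn).1 h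
    exact ⟨hdisj, fun _ => ⟨h₁.trans (by rw [hleft]), h₃.trans (by rw [hright])⟩, by omega⟩

theorem statement16 (T : Set (Fin 2 → ℝ)) (hself : SelfAffine A67 D67 T)
    (w : ℕ → Fin 2 → ℤ) (hw0 : w 0 = 0)
    (hwrec : ∀ n, w (n + 1) = A67.mulVec (w n) + ![3, 0])
    (W₁ W₂ W₃ : ℕ → Set (Fin 2 → ℤ))
    (h11 : W₁ 1 = {![0, 0], ![1, 0], ![2, 0]})
    (h21 : W₂ 1 = {![3, 0]})
    (h31 : W₃ 1 = {![4, 0], ![5, 0], ![6, 0]})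
    (h2rec : ∀ n, 1 ≤ n → W₂ (n + 1) = {w (n + 1)})
    (h1odd : ∀ n, 1 ≤ n → n % 2 = 1 → W₁ (n + 1) = childSet A67 D67 (W₁ n) ∪
      {A67.mulVec (w n) + ![4, 0], A67.mulVec (w n) + ![5, 0], A67.mulVec (w n) + ![6, 0]})
    (h1even : ∀ n, 1 ≤ n → n % 2 = 0 → W₁ (n + 1) = childSet A67 D67 (W₁ n) ∪
      {A67.mulVec (w n) + ![0, 0], A67.mulVec (w n) + ![1, 0], A67.mulVec (w n) + ![2, 0]})
    (h3odd : ∀ n, 1 ≤ n → n % 2 = 1 → W₃ (n + 1) = childSet A67 D67 (W₃ n) ∪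
      {A67.mulVec (w n) + ![0, 0], A67.mulVec (w n) + ![1, 0], A67.mulVec (w n) + ![2, 0]})
    (h3even : ∀ n, 1 ≤ n → n % 2 = 0 → W₃ (n + 1) = childSet A67 D67 (W₃ n) ∪
      {A67.mulVec (w n) + ![4, 0], A67.mulVec (w n) + ![5, 0], A67.mulVec (w n) + ![6, 0]}) :
    ∀ n, 1 ≤ n →
      (∀ v ∈ W₁ n, ∀ v' ∈ W₃ n, trT T v ∩ trT T v' = ∅) ∧
      (n % 2 = 1 →
        {v ∈ W₁ n | (trT T v ∩ trT T (w n)).Nonempty} = {A67.mulVec (w (n - 1)) + ![2, 0]} ∧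
        {v ∈ W₃ n | (trT T v ∩ trT T (w n)).Nonempty} = {A67.mulVec (w (n - 1)) + ![4, 0]}) ∧
      (n % 2 = 0 →
        {v ∈ W₁ n | (trT T v ∩ trT T (w n)).Nonempty} = {A67.mulVec (w (n - 1)) + ![4, 0]} ∧
        {v ∈ W₃ n | (trT T v ∩ trT T (w n)).Nonempty} = {A67.mulVec (w (n - 1)) + ![2, 0]}) :=
  statement16_general T hself w hw0 hwrec W₁ W₃ h11 h31 h1odd h1even h3odd h3even
end
end

section
/- Let A be the 2×2 integer matrix with rows (0, −7) and (1, −6), let D := {(i,0) : 0 ≤ i ≤ 6} ⊂ ℤ², and let T = T(A,D) be the unique nonempty compact subset of ℝ² with A·T = T + D. Then T is connected and the point z := Σ_{k=1}^{∞} A^{-k} (3,0) = (−3/2, −3/14) is a cut point of T, i.e., T \ {(−3/2, −3/14)} is disconnected. -/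
open Set Filter Topology Matrix

noncomputable section

/-!
The eigenvalues of `A` are the roots `β = -3 ± √2` of `β² + 6β + 7`, and the eigen-functionals
`φ_β x = x₀ + β x₁` satisfy `φ_β (A⁻¹ x) = φ_β x / β`; in these coordinates the seven maps
`x ↦ A⁻¹ (x + (j, 0))` are products of one-dimensional contractions. The set equation confines
`T` to the parallelogram `|φ_β (x - z)| ≤ 3 / (|β| - 1)`, where `z` is the fixed point of the
digit `3`. For `β₂ = -3 - √2` this radius is `< 1`, which forces every point of `T` on the line
`φ_β₂ x = φ_β₂ z` to carry the digit `3`; iterating, the line meets `T` only in `z`, and its two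
sides separate `T \ {z}`.

`T` is the intersection of the iterates of the parallelogram under the Hutchinson operator.
Each iterate is connected: neighbouring pieces `A⁻¹ (K + (j, 0))` and `A⁻¹ (K + (j + 1, 0))` meet
as soon as `K` meets `K + (1, 0)`, and under the operator this property and `K` meeting
`K + (6, 1)` produce each other.
-/

theorem le_div_sub_one_of_forall_exists_mul_le {α : Type*} {S : Set α} {f : α → ℝ}
    (hf : BddAbove (f '' S)) {a q : ℝ} (hq : 1 < q)
    (h : ∀ x ∈ S, ∃ y ∈ S, q * f x ≤ f y + a) : ∀ x ∈ S, f x ≤ a / (q - 1) := by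
  intro x hx
  have hle : ∀ y ∈ S, f y ≤ sSup (f '' S) := fun y hy => le_csSup hf (mem_image_of_mem f hy)
  have hsup : sSup (f '' S) ≤ (sSup (f '' S) + a) / q := by
    refine csSup_le ⟨f x, mem_image_of_mem f hx⟩ ?_
    rintro _ ⟨y, hy, rfl⟩
    obtain ⟨y', hy', hyy'⟩ := h y hy
    rw [le_div_iff₀' (by linarith)]
    linarith [hle y' hy']
  rw [le_div_iff₀' (by linarith)] at hsup
  rw [le_div_iff₀ (by linarith)]
  nlinarith [hle x hx]

theorem IsConnected.iInter_of_directed {X ι : Type*} [TopologicalSpace X] [T2Space X]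
    [Nonempty ι] {K : ι → Set X} (hdir : Directed (· ⊇ ·) K) (hcomp : ∀ i, IsCompact (K i))
    (hconn : ∀ i, IsConnected (K i)) : IsConnected (⋂ i, K i) := by
  have hclosed : ∀ i, IsClosed (K i) := fun i => (hcomp i).isClosed
  refine ⟨IsCompact.nonempty_iInter_of_directed_nonempty_isCompact_isClosed K hdir
    (fun i => (hconn i).nonempty) hcomp hclosed, ?_⟩
  rw [isPreconnected_closed_iff]
  rintro A B hA hB hcover ⟨a, haK, haA⟩ ⟨b, hbK, hbB⟩
  by_contra hAB
  have hC : IsCompact (⋂ i, K i) :=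
    (hcomp (Classical.arbitrary ι)).of_isClosed_subset (isClosed_iInter hclosed)
      (iInter_subset _ _)
  obtain ⟨U, V, hU, hV, hAU, hBV, hUV⟩ := SeparatedNhds.of_isCompact_isCompact
    (hC.inter_right hA) (hC.inter_right hB)
    (disjoint_left.2 fun x hxA hxB => hAB ⟨x, hxA.1, hxA.2, hxB.2⟩)
  obtain ⟨i, hi⟩ : ∃ i, K i ⊆ U ∪ V := by
    refine exists_subset_nhds_of_isCompact hdir hcomp fun x hx => (hU.union hV).mem_nhds ?_
    rcases hcover hx with h | h
    exacts [Or.inl (hAU ⟨hx, h⟩), Or.inr (hBV ⟨hx, h⟩)]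
  obtain ⟨x, -, hxU, hxV⟩ := (hconn i).isPreconnected U V hU hV hi
    ⟨a, mem_iInter.1 haK i, hAU ⟨haK, haA⟩⟩ ⟨b, mem_iInter.1 hbK i, hBV ⟨hbK, hbB⟩⟩
  exact hUV.le_bot ⟨hxU, hxV⟩

theorem sepUnion_inter_setOf_ne {α β : Type*} [TopologicalSpace α] [TopologicalSpace β]
    [LinearOrder β] [OrderClosedTopology β] {f : α → β} (hf : Continuous f) {S : Set α}
    {c : β} (hlt : ∃ x ∈ S, f x < c) (hgt : ∃ x ∈ S, c < f x) :
    SepUnion (S ∩ {x | f x ≠ c}) := by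
  obtain ⟨x, hxS, hx⟩ := hlt
  obtain ⟨y, hyS, hy⟩ := hgt
  have hle : closure (S ∩ {x | f x < c}) ⊆ {x | f x ≤ c} :=
    closure_minimal (fun x hx => hx.2.le) (isClosed_le hf continuous_const)
  have hge : closure (S ∩ {x | c < f x}) ⊆ {x | c ≤ f x} :=
    closure_minimal (fun x hx => hx.2.le) (isClosed_le continuous_const hf)
  refine ⟨S ∩ {x | f x < c}, S ∩ {x | c < f x}, ?_, ⟨x, hxS, hx⟩, ⟨y, hyS, hy⟩, ?_, ?_⟩
  · ext x
    simp only [mem_inter_iff, mem_ofPred_eq, mem_union, ne_iff_lt_or_gt, and_or_left]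
  · exact eq_empty_iff_forall_notMem.2 fun x ⟨h, hV⟩ => (hle h).not_gt hV.2
  · exact eq_empty_iff_forall_notMem.2 fun x ⟨hU, h⟩ => (hge h).not_gt hU.2

def A67inv : Matrix (Fin 2) (Fin 2) ℝ := !![-6 / 7, 1; -1 / 7, 0]

lemma A67inv_mul_rmat_A67 : A67inv * rmat A67 = 1 := by
  ext i j
  fin_cases i <;> fin_cases j <;> norm_num [A67inv, rmat, A67, Matrix.mul_apply]

lemma rmat_A67_mul_A67inv : rmat A67 * A67inv = 1 := by
  ext i j
  fin_cases i <;> fin_cases j <;> norm_num [A67inv, rmat, A67, Matrix.mul_apply]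

lemma inv_rmat_A67 : (rmat A67)⁻¹ = A67inv := Matrix.inv_eq_left_inv A67inv_mul_rmat_A67

lemma A67inv_mulVec (x : Fin 2 → ℝ) : A67inv *ᵥ x = ![-6 / 7 * x 0 + x 1, -1 / 7 * x 0] := by
  ext i
  fin_cases i <;> simp [A67inv, Matrix.mulVec, dotProduct]

def eigenCoord (b : ℝ) (x : Fin 2 → ℝ) : ℝ := x 0 + b * x 1

lemma continuous_eigenCoord (b : ℝ) : Continuous (eigenCoord b) :=
  (continuous_apply 0).add (continuous_const.mul (continuous_apply 1))

lemma lt_neg_one_of_root {b : ℝ} (hb : b ^ 2 + 6 * b + 7 = 0) : b < -1 := by nlinarith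

lemma neg_five_lt_of_root {b : ℝ} (hb : b ^ 2 + 6 * b + 7 = 0) : -5 < b := by nlinarith

lemma eigenCoord_A67inv_mulVec {b : ℝ} (hb : b ^ 2 + 6 * b + 7 = 0) (x : Fin 2 → ℝ) :
    eigenCoord b (A67inv *ᵥ x) = eigenCoord b x / b := by
  have hb0 : b ≠ 0 := by linarith [lt_neg_one_of_root hb]
  rw [A67inv_mulVec, eq_div_iff hb0]
  simp only [eigenCoord, Matrix.cons_val_zero, Matrix.cons_val_one]
  linear_combination (-x 0 / 7) * hb

lemma eigenCoord_A67inv_pow_mulVec {b : ℝ} (hb : b ^ 2 + 6 * b + 7 = 0) (n : ℕ) (x : Fin 2 → ℝ) :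
    eigenCoord b (A67inv ^ n *ᵥ x) = eigenCoord b x / b ^ n := by
  induction n generalizing x with
  | zero => simp
  | succ n ih =>
    rw [pow_succ, ← Matrix.mulVec_mulVec, ih, eigenCoord_A67inv_mulVec hb, div_div, pow_succ']

def β₁ : ℝ := -3 + √2

def β₂ : ℝ := -3 - √2

lemma β₁_root : β₁ ^ 2 + 6 * β₁ + 7 = 0 := by
  have := Real.sq_sqrt (show (0 : ℝ) ≤ 2 by norm_num)
  unfold β₁; linear_combination this

lemma β₂_root : β₂ ^ 2 + 6 * β₂ + 7 = 0 := by
  have := Real.sq_sqrt (show (0 : ℝ) ≤ 2 by norm_num)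
  unfold β₂; linear_combination this

lemma β₂_lt_neg_four : β₂ < -4 := by
  have : 1 < √2 := by rw [Real.lt_sqrt zero_le_one]; norm_num
  unfold β₂; linarith

lemma β₁_sub_β₂_ne_zero : β₁ - β₂ ≠ 0 := by
  have : 0 < √2 := by positivity
  unfold β₁ β₂; linarith

def eigenCoords : (Fin 2 → ℝ) ≃L[ℝ] ℝ × ℝ :=
  LinearEquiv.toContinuousLinearEquiv
    { toFun := fun x => (eigenCoord β₁ x, eigenCoord β₂ x)
      invFun := fun p => ![(β₁ * p.2 - β₂ * p.1) / (β₁ - β₂), (p.1 - p.2) / (β₁ - β₂)]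
      map_add' := fun x y => by simp only [eigenCoord, Pi.add_apply, Prod.mk_add_mk]; ring_nf
      map_smul' := fun c x => by
        simp only [eigenCoord, Pi.smul_apply, smul_eq_mul, RingHom.id_apply, Prod.smul_mk]
        ring_nf
      left_inv := fun x => by
        have := β₁_sub_β₂_ne_zero
        ext i
        fin_cases i
        · simp [eigenCoord]; field_simp; ring
        · simp [eigenCoord]; field_simp
      right_inv := fun p => by
        have := β₁_sub_β₂_ne_zero
        ext <;> simp [eigenCoord] <;> field_simp <;> ring }

lemma eigenCoords_apply (x : Fin 2 → ℝ) :
    eigenCoords x = (eigenCoord β₁ x, eigenCoord β₂ x) := rfl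

lemma eq_of_eigenCoord_eq {x y : Fin 2 → ℝ} (h₁ : eigenCoord β₁ x = eigenCoord β₁ y)
    (h₂ : eigenCoord β₂ x = eigenCoord β₂ y) : x = y :=
  eigenCoords.injective (Prod.ext h₁ h₂)

lemma tendsto_of_eigenCoord {ι : Type*} {l : Filter ι} {w : ι → Fin 2 → ℝ} {y : Fin 2 → ℝ}
    (h₁ : Tendsto (fun i => eigenCoord β₁ (w i)) l (𝓝 (eigenCoord β₁ y)))
    (h₂ : Tendsto (fun i => eigenCoord β₂ (w i)) l (𝓝 (eigenCoord β₂ y))) :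
    Tendsto w l (𝓝 y) := by
  have h := (eigenCoords.symm.continuous.tendsto _).comp (h₁.prodMk_nhds h₂)
  simpa [Function.comp_def, ← eigenCoords_apply] using h

lemma summable_of_eigenCoord {w : ℕ → Fin 2 → ℝ}
    (h₁ : Summable fun k => eigenCoord β₁ (w k)) (h₂ : Summable fun k => eigenCoord β₂ (w k)) :
    Summable w :=
  eigenCoords.summable.1 ⟨_, h₁.hasSum.prodMk h₂.hasSum⟩

lemma abs_eigenCoord_le (b : ℝ) (x : Fin 2 → ℝ) : |eigenCoord b x| ≤ (1 + |b|) * ‖x‖ := by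
  have h₀ : |x 0| ≤ ‖x‖ := norm_le_pi_norm x 0
  have h₁ : |x 1| ≤ ‖x‖ := norm_le_pi_norm x 1
  calc |eigenCoord b x| ≤ |x 0| + |b| * |x 1| := by
        rw [← abs_mul]; exact abs_add_le _ _
    _ ≤ (1 + |b|) * ‖x‖ := by nlinarith [abs_nonneg b]

lemma tendsto_A67inv_pow_mulVec_zero {v : ℕ → Fin 2 → ℝ} {C : ℝ} (hv : ∀ n, ‖v n‖ ≤ C) :
    Tendsto (fun n => A67inv ^ n *ᵥ v n) atTop (𝓝 0) := by
  have key : ∀ b : ℝ, b ^ 2 + 6 * b + 7 = 0 →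
      Tendsto (fun n => eigenCoord b (A67inv ^ n *ᵥ v n)) atTop (𝓝 (eigenCoord b 0)) := by
    intro b hb
    have hb1 : 1 < |b| := by
      have := lt_neg_one_of_root hb
      rw [abs_of_neg (by linarith)]; linarith
    have hgeom : Tendsto (fun n : ℕ => (1 + |b|) * C * |b|⁻¹ ^ n) atTop (𝓝 0) := by
      simpa using (tendsto_pow_atTop_nhds_zero_of_lt_one (by positivity)
        (inv_lt_one_of_one_lt₀ hb1)).const_mul ((1 + |b|) * C)
    rw [show eigenCoord b 0 = 0 by simp [eigenCoord]]
    refine squeeze_zero_norm (fun n => ?_) hgeom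
    rw [eigenCoord_A67inv_pow_mulVec hb, Real.norm_eq_abs, abs_div, abs_pow, inv_pow,
      ← div_eq_mul_inv]
    gcongr
    exact (abs_eigenCoord_le b (v n)).trans (by gcongr; exact hv n)
  exact tendsto_of_eigenCoord (key β₁ β₁_root) (key β₂ β₂_root)

def digitMap (j : ℤ) (x : Fin 2 → ℝ) : Fin 2 → ℝ := A67inv *ᵥ (x + ![(j : ℝ), 0])

def hutchinson (K : Set (Fin 2 → ℝ)) : Set (Fin 2 → ℝ) := ⋃ j ∈ Icc (0 : ℤ) 6, digitMap j '' K

lemma continuous_digitMap (j : ℤ) : Continuous (digitMap j) :=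
  continuous_const.matrix_mulVec (continuous_id.add continuous_const)

lemma digitMap_apply (j : ℤ) (x : Fin 2 → ℝ) :
    digitMap j x = ![-6 / 7 * (x 0 + j) + x 1, -1 / 7 * (x 0 + j)] := by
  rw [digitMap, A67inv_mulVec]
  simp

lemma digitMap_sub_digitMap (j : ℤ) (x y : Fin 2 → ℝ) :
    digitMap j x - digitMap j y = A67inv *ᵥ (x - y) := by
  rw [digitMap, digitMap, ← Matrix.mulVec_sub, add_sub_add_right_eq_sub]

lemma eigenCoord_digitMap {b : ℝ} (hb : b ^ 2 + 6 * b + 7 = 0) (j : ℤ) (x : Fin 2 → ℝ) :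
    eigenCoord b (digitMap j x) = (eigenCoord b x + j) / b := by
  rw [digitMap, eigenCoord_A67inv_mulVec hb]
  simp only [eigenCoord, Pi.add_apply, Matrix.cons_val_zero, Matrix.cons_val_one]
  ring

lemma digitMap_eq_iff {j : ℤ} {x y : Fin 2 → ℝ} :
    digitMap j x = y ↔ x + rvec ![j, 0] = rmat A67 *ᵥ y := by
  have hv : rvec ![j, 0] = ![(j : ℝ), 0] := by ext i; fin_cases i <;> simp [rvec]
  rw [hv, digitMap]
  constructor
  · rintro rfl
    rw [Matrix.mulVec_mulVec, rmat_A67_mul_A67inv, Matrix.one_mulVec]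
  · intro h
    rw [h, Matrix.mulVec_mulVec, A67inv_mul_rmat_A67, Matrix.one_mulVec]

lemma hutchinson_mono : Monotone hutchinson :=
  fun _ _ h => biUnion_mono subset_rfl fun _ _ => image_mono h

lemma IsCompact.hutchinson {K : Set (Fin 2 → ℝ)} (hK : IsCompact K) :
    IsCompact (hutchinson K) :=
  (finite_Icc 0 6).isCompact_biUnion fun j _ => hK.image (continuous_digitMap j)

def cutPoint : Fin 2 → ℝ := ![-(3 : ℝ) / 2, -(3 : ℝ) / 14]

lemma digitMap_three_cutPoint : digitMap 3 cutPoint = cutPoint := by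
  rw [digitMap, A67inv_mulVec]
  ext i
  fin_cases i <;> norm_num [cutPoint]

lemma root_mul_eigenCoord_cutPoint {b : ℝ} (hb : b ^ 2 + 6 * b + 7 = 0) :
    b * eigenCoord b cutPoint = eigenCoord b cutPoint + 3 := by
  have hb0 : b ≠ 0 := by linarith [lt_neg_one_of_root hb]
  have h := congrArg (eigenCoord b) digitMap_three_cutPoint
  rw [eigenCoord_digitMap hb, div_eq_iff hb0] at h
  push_cast at h
  linarith

lemma eigenCoord_digitMap_sub_cutPoint {b : ℝ} (hb : b ^ 2 + 6 * b + 7 = 0) (j : ℤ)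
    (x : Fin 2 → ℝ) :
    eigenCoord b (digitMap j x) - eigenCoord b cutPoint =
      (eigenCoord b x - eigenCoord b cutPoint + (j - 3)) / b := by
  have hb0 : b ≠ 0 := by linarith [lt_neg_one_of_root hb]
  rw [eigenCoord_digitMap hb, eq_div_iff hb0, sub_mul, div_mul_cancel₀ _ hb0, mul_comm,
    root_mul_eigenCoord_cutPoint hb]
  ring

-- The fixed point of `r ↦ (r + 3) / |b|`, the bound that one digit map obeys
-- (`neg_mul_abs_eigenCoord_digitMap_sub_le`).
def radius (b : ℝ) : ℝ := 3 / (-b - 1)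

lemma neg_mul_radius {b : ℝ} (hb : b ^ 2 + 6 * b + 7 = 0) : -b * radius b = radius b + 3 := by
  have : -b - 1 ≠ 0 := by linarith [lt_neg_one_of_root hb]
  unfold radius; field_simp; ring

lemma radius_pos {b : ℝ} (hb : b ^ 2 + 6 * b + 7 = 0) : 0 < radius b := by
  have := lt_neg_one_of_root hb
  unfold radius; exact div_pos (by norm_num) (by linarith)

lemma radius_β₂_lt_one : radius β₂ < 1 := by
  have := β₂_lt_neg_four
  unfold radius; rw [div_lt_one (by linarith)]; linarith

lemma neg_mul_abs_eigenCoord_digitMap_sub_le {b : ℝ} (hb : b ^ 2 + 6 * b + 7 = 0) {j : ℤ}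
    (hj : j ∈ Icc (0 : ℤ) 6) (x : Fin 2 → ℝ) :
    -b * |eigenCoord b (digitMap j x) - eigenCoord b cutPoint| ≤
      |eigenCoord b x - eigenCoord b cutPoint| + 3 := by
  have hb0 : b < 0 := by linarith [lt_neg_one_of_root hb]
  have hj3 : |(j : ℝ) - 3| ≤ 3 := by
    have h₀ : (0 : ℝ) ≤ j := by exact_mod_cast hj.1
    have h₆ : (j : ℝ) ≤ 6 := by exact_mod_cast hj.2
    rw [abs_le]; constructor <;> linarith
  rw [eigenCoord_digitMap_sub_cutPoint hb, abs_div, abs_of_neg hb0,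
    mul_div_cancel₀ _ (neg_pos.2 hb0).ne']
  exact (abs_add_le _ _).trans (by linarith)

lemma abs_eigenCoord_digitMap_sub_le_radius {b : ℝ} (hb : b ^ 2 + 6 * b + 7 = 0) {j : ℤ}
    (hj : j ∈ Icc (0 : ℤ) 6) {x : Fin 2 → ℝ}
    (hx : |eigenCoord b x - eigenCoord b cutPoint| ≤ radius b) :
    |eigenCoord b (digitMap j x) - eigenCoord b cutPoint| ≤ radius b := by
  have hb0 : 0 < -b := by linarith [lt_neg_one_of_root hb]
  refine le_of_mul_le_mul_left ?_ hb0
  linarith [neg_mul_abs_eigenCoord_digitMap_sub_le hb hj x, neg_mul_radius hb]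

def parallelogram : Set (Fin 2 → ℝ) :=
  eigenCoords ⁻¹' (Metric.closedBall (eigenCoord β₁ cutPoint) (radius β₁) ×ˢ
    Metric.closedBall (eigenCoord β₂ cutPoint) (radius β₂))

lemma mem_parallelogram {x : Fin 2 → ℝ} :
    x ∈ parallelogram ↔ |eigenCoord β₁ x - eigenCoord β₁ cutPoint| ≤ radius β₁ ∧
      |eigenCoord β₂ x - eigenCoord β₂ cutPoint| ≤ radius β₂ := by
  simp only [parallelogram, mem_preimage, eigenCoords_apply, mem_prod, Metric.mem_closedBall,
    Real.dist_eq]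

lemma isCompact_parallelogram : IsCompact parallelogram :=
  eigenCoords.toHomeomorph.isCompact_preimage.2
    ((isCompact_closedBall _ _).prod (isCompact_closedBall _ _))

lemma isConnected_parallelogram : IsConnected parallelogram :=
  eigenCoords.toHomeomorph.isConnected_preimage.2
    (((convex_closedBall _ _).isConnected
        (Metric.nonempty_closedBall.2 (radius_pos β₁_root).le)).prod
      ((convex_closedBall _ _).isConnected
        (Metric.nonempty_closedBall.2 (radius_pos β₂_root).le)))

lemma hutchinson_parallelogram_subset : hutchinson parallelogram ⊆ parallelogram := by
  simp only [hutchinson, iUnion_subset_iff, image_subset_iff]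
  intro j hj x hx
  rw [mem_parallelogram] at hx
  exact mem_parallelogram.2 ⟨abs_eigenCoord_digitMap_sub_le_radius β₁_root hj hx.1,
    abs_eigenCoord_digitMap_sub_le_radius β₂_root hj hx.2⟩

lemma cutPoint_mem_parallelogram : cutPoint ∈ parallelogram := by
  simp only [mem_parallelogram, sub_self, abs_zero]
  exact ⟨(radius_pos β₁_root).le, (radius_pos β₂_root).le⟩

def OverlapsShift (K : Set (Fin 2 → ℝ)) (v : Fin 2 → ℝ) : Prop := ∃ y ∈ K, y - v ∈ K

lemma overlapsShift_parallelogram {v : Fin 2 → ℝ}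
    (hv : ∀ b : ℝ, b ^ 2 + 6 * b + 7 = 0 → |eigenCoord b v| ≤ 2 * radius b) :
    OverlapsShift parallelogram v := by
  have hmid : ∀ (b : ℝ) (s : ℝ), eigenCoord b (cutPoint + s • v) - eigenCoord b cutPoint =
      s * eigenCoord b v := fun b s => by
    simp only [eigenCoord, Pi.add_apply, Pi.smul_apply, smul_eq_mul]; ring
  have hhalf : ∀ b : ℝ, b ^ 2 + 6 * b + 7 = 0 → ∀ s : ℝ, |s| = 1 / 2 →
      |eigenCoord b (cutPoint + s • v) - eigenCoord b cutPoint| ≤ radius b := fun b hb s hs => by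
    rw [hmid, abs_mul, hs]; linarith [hv b hb]
  refine ⟨cutPoint + (1 / 2 : ℝ) • v, ?_, ?_⟩
  · exact mem_parallelogram.2 ⟨hhalf _ β₁_root _ (by norm_num), hhalf _ β₂_root _ (by norm_num)⟩
  · have : cutPoint + (1 / 2 : ℝ) • v - v = cutPoint + (-1 / 2 : ℝ) • v := by
      module
    rw [this]
    exact mem_parallelogram.2 ⟨hhalf _ β₁_root _ (by norm_num), hhalf _ β₂_root _ (by norm_num)⟩

lemma overlapsShift_parallelogram_one_zero : OverlapsShift parallelogram ![1, 0] :=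
  overlapsShift_parallelogram fun b hb => by
    have := neg_five_lt_of_root hb
    have := lt_neg_one_of_root hb
    simp only [eigenCoord, Matrix.cons_val_zero, Matrix.cons_val_one, mul_zero, add_zero,
      abs_one, radius]
    rw [mul_div_assoc', le_div_iff₀ (by linarith)]; linarith

lemma overlapsShift_parallelogram_six_one : OverlapsShift parallelogram ![6, 1] :=
  overlapsShift_parallelogram fun b hb => by
    have := neg_five_lt_of_root hb
    have := lt_neg_one_of_root hb
    simp only [eigenCoord, Matrix.cons_val_zero, Matrix.cons_val_one, mul_one, radius]
    rw [abs_of_pos (by linarith), mul_div_assoc', le_div_iff₀ (by linarith)]; nlinarith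

lemma IsConnected.hutchinson {K : Set (Fin 2 → ℝ)} (hK : IsConnected K)
    (h : OverlapsShift K ![1, 0]) : IsConnected (hutchinson K) := by
  obtain ⟨y, hy, hy'⟩ := h
  refine IsConnected.biUnion_of_chain (nonempty_Icc.2 (by norm_num)) ordConnected_Icc
    (fun j _ => hK.image _ (continuous_digitMap j).continuousOn) fun j _ _ =>
      ⟨digitMap j y, mem_image_of_mem _ hy, y - ![1, 0], hy', ?_⟩
  rw [Order.succ_eq_add_one]
  ext i
  fin_cases i <;> simp [digitMap_apply, Matrix.vecHead, Matrix.vecTail]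

lemma overlapsShift_hutchinson_one_zero {K : Set (Fin 2 → ℝ)} (h : OverlapsShift K ![6, 1]) :
    OverlapsShift (hutchinson K) ![1, 0] := by
  obtain ⟨y, hy, hy'⟩ := h
  refine ⟨digitMap 0 y, mem_biUnion (by norm_num) (mem_image_of_mem _ hy), ?_⟩
  have : digitMap 0 y - ![1, 0] = digitMap 6 (y - ![6, 1]) := by
    ext i
    fin_cases i
    · simp [digitMap_apply, Matrix.vecHead, Matrix.vecTail]; ring
    · simp [digitMap_apply, Matrix.vecHead, Matrix.vecTail]
  exact this ▸ mem_biUnion (by norm_num) (mem_image_of_mem _ hy')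

lemma overlapsShift_hutchinson_six_one {K : Set (Fin 2 → ℝ)} (h : OverlapsShift K ![1, 0]) :
    OverlapsShift (hutchinson K) ![6, 1] := by
  obtain ⟨y, hy, hy'⟩ := h
  refine ⟨digitMap 0 (y - ![1, 0]), mem_biUnion (by norm_num) (mem_image_of_mem _ hy'), ?_⟩
  have : digitMap 0 (y - ![1, 0]) - ![6, 1] = digitMap 6 y := by
    ext i
    fin_cases i <;> simp [digitMap_apply, Matrix.vecHead, Matrix.vecTail] <;> ring
  exact this ▸ mem_biUnion (by norm_num) (mem_image_of_mem _ hy)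

lemma iterate_hutchinson_parallelogram (n : ℕ) :
    IsCompact (hutchinson^[n] parallelogram) ∧ IsConnected (hutchinson^[n] parallelogram) ∧
      OverlapsShift (hutchinson^[n] parallelogram) ![1, 0] ∧
      OverlapsShift (hutchinson^[n] parallelogram) ![6, 1] := by
  induction n with
  | zero =>
    exact ⟨isCompact_parallelogram, isConnected_parallelogram,
      overlapsShift_parallelogram_one_zero, overlapsShift_parallelogram_six_one⟩
  | succ n ih =>
    obtain ⟨hcomp, hconn, h₁, h₂⟩ := ih
    rw [Function.iterate_succ_apply']
    exact ⟨hcomp.hutchinson, hconn.hutchinson h₁, overlapsShift_hutchinson_one_zero h₂,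
      overlapsShift_hutchinson_six_one h₁⟩

lemma exists_sub_eq_A67inv_pow_mulVec_sub {K S : Set (Fin 2 → ℝ)} (hS : S.Nonempty) (n : ℕ)
    {y : Fin 2 → ℝ} (hy : y ∈ hutchinson^[n] K) :
    ∃ t ∈ hutchinson^[n] S, ∃ k ∈ K, ∃ s ∈ S, y - t = A67inv ^ n *ᵥ (k - s) := by
  induction n generalizing y with
  | zero =>
    obtain ⟨s, hs⟩ := hS
    exact ⟨s, hs, y, hy, s, hs, by simp⟩
  | succ n ih =>
    rw [Function.iterate_succ_apply'] at hy ⊢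
    simp only [hutchinson, mem_iUnion, mem_image, exists_prop] at hy
    obtain ⟨j, hj, x, hx, rfl⟩ := hy
    obtain ⟨t, ht, k, hk, s, hs, h⟩ := ih hx
    refine ⟨digitMap j t, mem_biUnion hj (mem_image_of_mem _ ht), k, hk, s, hs, ?_⟩
    rw [digitMap_sub_digitMap, h, Matrix.mulVec_mulVec, ← pow_succ']

lemma sum_range_A67inv_pow_succ_mulVec (n : ℕ) :
    ∑ k ∈ Finset.range n, A67inv ^ (k + 1) *ᵥ ![(3 : ℝ), 0] =
      cutPoint - A67inv ^ n *ᵥ cutPoint := by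
  have hfix : A67inv *ᵥ cutPoint = cutPoint - A67inv *ᵥ ![(3 : ℝ), 0] := by
    have := digitMap_three_cutPoint
    rw [digitMap, Matrix.mulVec_add] at this
    push_cast at this
    exact eq_sub_of_add_eq this
  induction n with
  | zero => simp
  | succ n ih =>
    rw [Finset.sum_range_succ, ih, pow_succ, ← Matrix.mulVec_mulVec, ← Matrix.mulVec_mulVec, hfix,
      Matrix.mulVec_sub]
    abel

lemma tsum_A67inv_pow_succ_mulVec : ∑' k : ℕ, A67inv ^ (k + 1) *ᵥ ![(3 : ℝ), 0] = cutPoint := by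
  have key : ∀ b : ℝ, b ^ 2 + 6 * b + 7 = 0 →
      Summable fun k : ℕ => eigenCoord b (A67inv ^ (k + 1) *ᵥ ![(3 : ℝ), 0]) := by
    intro b hb
    have hb1 := lt_neg_one_of_root hb
    have hr : |b⁻¹| < 1 := by
      rw [abs_inv, abs_of_neg (by linarith)]; exact inv_lt_one_of_one_lt₀ (by linarith)
    refine ((summable_geometric_of_abs_lt_one hr).mul_left (3 / b)).congr fun k => ?_
    rw [eigenCoord_A67inv_pow_mulVec hb, pow_succ', inv_pow, ← div_div]
    simp [eigenCoord, div_eq_mul_inv]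
  have hsum := summable_of_eigenCoord (key _ β₁_root) (key _ β₂_root)
  refine (hsum.hasSum_iff_tendsto_nat.2 ?_).tsum_eq
  simp_rw [sum_range_A67inv_pow_succ_mulVec]
  simpa using tendsto_const_nhds.sub
    (tendsto_A67inv_pow_mulVec_zero (v := fun _ => cutPoint) (C := ‖cutPoint‖) fun _ => le_rfl)

section SelfAffine

variable {T : Set (Fin 2 → ℝ)}

lemma hutchinson_eq_of_selfAffine (hT : SelfAffine A67 D67 T) :
    hutchinson T = T := by
  have hinj : Function.Injective (rmat A67).mulVec := fun x y h => by
    simpa only [Matrix.mulVec_mulVec, A67inv_mul_rmat_A67, Matrix.one_mulVec] using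
      congrArg (A67inv *ᵥ ·) h
  ext y
  conv_rhs => rw [← hinj.mem_set_image, hT.2.2]
  simp only [hutchinson, D67, mem_iUnion, mem_image, mem_Icc, digitMap_eq_iff, exists_prop,
    mem_ofPred_eq]
  constructor
  · rintro ⟨j, hj, t, ht, h⟩
    exact ⟨_, ⟨j, hj.1, hj.2, rfl⟩, t, ht, h⟩
  · rintro ⟨_, ⟨j, hj₀, hj₆, rfl⟩, t, ht, h⟩
    exact ⟨j, ⟨hj₀, hj₆⟩, t, ht, h⟩

lemma abs_eigenCoord_sub_cutPoint_le (hT : SelfAffine A67 D67 T) {b : ℝ}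
    (hb : b ^ 2 + 6 * b + 7 = 0) :
    ∀ x ∈ T, |eigenCoord b x - eigenCoord b cutPoint| ≤ radius b := by
  have hcont : Continuous fun x => |eigenCoord b x - eigenCoord b cutPoint| :=
    ((continuous_eigenCoord b).sub continuous_const).abs
  refine le_div_sub_one_of_forall_exists_mul_le (hT.2.1.image hcont).bddAbove
    (by linarith [lt_neg_one_of_root hb]) fun x hx => ?_
  rw [← hutchinson_eq_of_selfAffine hT] at hx
  simp only [hutchinson, mem_iUnion, mem_image, exists_prop] at hx
  obtain ⟨j, hj, t, ht, rfl⟩ := hx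
  exact ⟨t, ht, neg_mul_abs_eigenCoord_digitMap_sub_le hb hj t⟩

lemma eq_digitMap_three_of_eigenCoord_eq (hT : SelfAffine A67 D67 T) {x : Fin 2 → ℝ}
    (hx : x ∈ T) (h : eigenCoord β₂ x = eigenCoord β₂ cutPoint) :
    ∃ t ∈ T, eigenCoord β₂ t = eigenCoord β₂ cutPoint ∧ x = digitMap 3 t := by
  rw [← hutchinson_eq_of_selfAffine hT] at hx
  simp only [hutchinson, mem_iUnion, mem_image, exists_prop] at hx
  obtain ⟨j, -, t, ht, rfl⟩ := hx
  have hβ₂ : β₂ ≠ 0 := by linarith [β₂_lt_neg_four]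
  have ht₂ : eigenCoord β₂ t - eigenCoord β₂ cutPoint = 3 - j := by
    have := eigenCoord_digitMap_sub_cutPoint β₂_root j t
    rw [h, sub_self, eq_comm, div_eq_zero_iff] at this
    linarith [this.resolve_right hβ₂]
  have hj : j = 3 := by
    have := (abs_eigenCoord_sub_cutPoint_le hT β₂_root t ht).trans_lt radius_β₂_lt_one
    rw [ht₂] at this
    have h3 : |3 - j| < 1 := by exact_mod_cast this
    linarith [Int.abs_lt_one_iff.1 h3]
  subst hj
  exact ⟨t, ht, by push_cast at ht₂; linarith, rfl⟩

lemma eq_cutPoint_of_eigenCoord_eq (hT : SelfAffine A67 D67 T) {x : Fin 2 → ℝ} (hx : x ∈ T)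
    (h : eigenCoord β₂ x = eigenCoord β₂ cutPoint) : x = cutPoint := by
  set S := {x ∈ T | eigenCoord β₂ x = eigenCoord β₂ cutPoint}
  have hbdd : BddAbove ((fun x => |eigenCoord β₁ x - eigenCoord β₁ cutPoint|) '' S) :=
    ⟨radius β₁, forall_mem_image.2 fun x hx => abs_eigenCoord_sub_cutPoint_le hT β₁_root x hx.1⟩
  have hβ₁ : β₁ < 0 := by linarith [lt_neg_one_of_root β₁_root]
  have hstep : ∀ x ∈ S, ∃ y ∈ S, -β₁ * |eigenCoord β₁ x - eigenCoord β₁ cutPoint| ≤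
      |eigenCoord β₁ y - eigenCoord β₁ cutPoint| + 0 := by
    intro x hx
    obtain ⟨t, ht, ht₂, rfl⟩ := eq_digitMap_three_of_eigenCoord_eq hT hx.1 hx.2
    refine ⟨t, ⟨ht, ht₂⟩, le_of_eq ?_⟩
    rw [eigenCoord_digitMap_sub_cutPoint β₁_root, abs_div, abs_of_neg hβ₁,
      mul_div_cancel₀ _ (neg_ne_zero.2 hβ₁.ne)]
    norm_num
  have hle := le_div_sub_one_of_forall_exists_mul_le hbdd
    (by linarith [lt_neg_one_of_root β₁_root]) hstep x ⟨hx, h⟩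
  rw [zero_div] at hle
  exact eq_of_eigenCoord_eq (by linarith [abs_nonpos_iff.1 hle]) h

lemma subset_parallelogram (hT : SelfAffine A67 D67 T) :
    T ⊆ parallelogram := fun x hx =>
  mem_parallelogram.2 ⟨abs_eigenCoord_sub_cutPoint_le hT β₁_root x hx,
    abs_eigenCoord_sub_cutPoint_le hT β₂_root x hx⟩

lemma eq_iInter_iterate_hutchinson (hT : SelfAffine A67 D67 T) :
    T = ⋂ n, hutchinson^[n] parallelogram := by
  have hfix := hutchinson_eq_of_selfAffine hT
  refine Subset.antisymm (subset_iInter fun n => ?_) fun y hy => ?_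
  · simpa only [Function.iterate_fixed hfix] using
      hutchinson_mono.iterate n (subset_parallelogram hT)
  choose t ht k hk s hs h using fun n =>
    exists_sub_eq_A67inv_pow_mulVec_sub hT.1 n (mem_iInter.1 hy n)
  simp only [Function.iterate_fixed hfix] at ht
  obtain ⟨C, hC⟩ := isCompact_parallelogram.isBounded.exists_norm_le
  have hsmall := tendsto_A67inv_pow_mulVec_zero (v := fun n => k n - s n) (C := C + C) fun n =>
    (norm_sub_le _ _).trans (add_le_add (hC _ (hk n)) (hC _ (subset_parallelogram hT (hs n))))
  have hlim : Tendsto t atTop (𝓝 y) := by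
    simpa [← h] using (tendsto_const_nhds (x := y)).sub hsmall
  exact hT.2.1.isClosed.mem_of_tendsto hlim (Eventually.of_forall ht)

lemma isConnected_of_selfAffine (hT : SelfAffine A67 D67 T) : IsConnected T := by
  rw [eq_iInter_iterate_hutchinson hT]
  exact IsConnected.iInter_of_directed
    (hutchinson_mono.antitone_iterate_of_map_le hutchinson_parallelogram_subset).directed_ge
    (fun n => (iterate_hutchinson_parallelogram n).1)
    (fun n => (iterate_hutchinson_parallelogram n).2.1)

lemma cutPoint_mem_of_selfAffine (hT : SelfAffine A67 D67 T) : cutPoint ∈ T := by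
  rw [eq_iInter_iterate_hutchinson hT, mem_iInter]
  intro n
  induction n with
  | zero => exact cutPoint_mem_parallelogram
  | succ n ih =>
    rw [Function.iterate_succ_apply']
    exact mem_biUnion (x := 3) (by norm_num) ⟨cutPoint, ih, digitMap_three_cutPoint⟩

lemma sepUnion_diff_cutPoint (hT : SelfAffine A67 D67 T) : SepUnion (T \ {cutPoint}) := by
  have hdiff : T \ {cutPoint} = T ∩ {x | eigenCoord β₂ x ≠ eigenCoord β₂ cutPoint} := by
    ext x
    simp only [Set.mem_sdiff, mem_singleton_iff, mem_inter_iff, mem_ofPred_eq]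
    exact and_congr_right fun hx =>
      not_congr ⟨fun h => h ▸ rfl, eq_cutPoint_of_eigenCoord_eq hT hx⟩
  have hmem : ∀ j ∈ Icc (0 : ℤ) 6, digitMap j cutPoint ∈ T := fun j hj =>
    hutchinson_eq_of_selfAffine hT ▸
      mem_biUnion hj (mem_image_of_mem _ (cutPoint_mem_of_selfAffine hT))
  have hcoord (j : ℤ) : eigenCoord β₂ (digitMap j cutPoint) - eigenCoord β₂ cutPoint =
      (j - 3) / β₂ := by
    rw [eigenCoord_digitMap_sub_cutPoint β₂_root, sub_self, zero_add]
  have hβ₂ : β₂ < 0 := by linarith [β₂_lt_neg_four]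
  rw [hdiff]
  refine sepUnion_inter_setOf_ne (continuous_eigenCoord β₂)
    ⟨digitMap 6 cutPoint, hmem 6 (by norm_num), ?_⟩ ⟨digitMap 0 cutPoint, hmem 0 (by norm_num), ?_⟩
  · rw [← sub_neg, hcoord]
    exact div_neg_of_pos_of_neg (by norm_num) hβ₂
  · rw [← sub_pos, hcoord]
    exact div_pos_of_neg_of_neg (by norm_num) hβ₂

end SelfAffine

theorem statement17 (T : Set (Fin 2 → ℝ)) (hself : SelfAffine A67 D67 T) :
    IsConnected T ∧
      (∑' k : ℕ, ((rmat A67)⁻¹ ^ (k + 1)).mulVec ![(3 : ℝ), 0]) =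
        ![-(3 : ℝ) / 2, -(3 : ℝ) / 14] ∧
      ![-(3 : ℝ) / 2, -(3 : ℝ) / 14] ∈ T ∧
      SepUnion (T \ {![-(3 : ℝ) / 2, -(3 : ℝ) / 14]}) := by
  rw [inv_rmat_A67]
  exact ⟨isConnected_of_selfAffine hself, tsum_A67inv_pow_succ_mulVec,
    cutPoint_mem_of_selfAffine hself, sepUnion_diff_cutPoint hself⟩
end
end
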